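/- Let α ∈ [1/2,1)∪(1,∞) and γ = (1−α)/(2α). If positive definite ρ_{AB}, σ_{AB} on H_A ⊗ H_B satisfy σ_A^γ (σ_A^γ ρ_A σ_A^γ)^{α−1} σ_A^γ ⊗ 1_B = σ_{AB}^γ (σ_{AB}^γ ρ_{AB} σ_{AB}^γ)^{α−1} σ_{AB}^γ, then Q̃_α(ρ_{AB}‖σ_{AB}) = Q̃_α(ρ_A‖σ_A). -/

import Mathlib

open scoped Matrix ComplexOrder Kronecker

/-- Matrix power via the functional calculus: for a Hermitian matrix `A`,
`mpow A r` is `U * diag (eigenvalues ^ r) * Uᴴ` (with the convention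
`0 ^ r = 0` for `r ≠ 0`, i.e. powers are taken on the support). -/
noncomputable def mpow {m : Type*} [Fintype m] [DecidableEq m]
    (A : Matrix m m ℂ) (r : ℝ) : Matrix m m ℂ :=
  if hA : A.IsHermitian then
    (hA.eigenvectorUnitary : Matrix m m ℂ) *
      Matrix.diagonal (fun i => ((hA.eigenvalues i ^ r : ℝ) : ℂ)) *
      (hA.eigenvectorUnitary : Matrix m m ℂ)ᴴ
  else 0

/-- The sandwiched trace functional `Q̃_α(ρ‖σ) = tr[(σ^γ ρ σ^γ)^α]`, with `γ = (1-α)/(2α)`. -/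
noncomputable def Qt {m : Type*} [Fintype m] [DecidableEq m]
    (α : ℝ) (ρ σ : Matrix m m ℂ) : ℂ :=
  Matrix.trace (mpow (mpow σ ((1 - α) / (2 * α)) * ρ * mpow σ ((1 - α) / (2 * α))) α)

/-- `ρ` is a density matrix. -/
def IsDensity {m : Type*} [Fintype m] (ρ : Matrix m m ℂ) : Prop :=
  ρ.PosSemidef ∧ ρ.trace = 1

/-- Partial trace over the second tensor factor. -/
noncomputable def ptraceB {m d : Type*} [Fintype d]
    (ρ : Matrix (m × d) (m × d) ℂ) : Matrix m m ℂ :=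
  Matrix.of fun i j => ∑ k, ρ (i, k) (j, k)

/-! Multiplying the operator identity `Z_A ⊗ 1 = Z_AB` by `ρ_AB` and tracing gives
`tr[Z_A ρ_A] = tr[Z_AB ρ_AB]`, the partial trace being dual to `· ⊗ 1`. Each side is `Q̃_α` by
cyclicity: for `M = σ^γ` and `X = M ρ M ≥ 0`, `tr[M X^(α-1) M ρ] = tr[X^(α-1) X] = tr[X^α]`,
since `x^(α-1) x = x^α` for `x ≥ 0` once `α ≠ 0`. -/

open Matrix

section MatrixPower

variable {n : Type*} [Fintype n] [DecidableEq n]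

theorem mpow_eq_cfc {A : Matrix n n ℂ} (hA : A.IsHermitian) (r : ℝ) :
    mpow A r = cfc (fun x : ℝ => x ^ r) A := by
  rw [mpow, dif_pos hA, hA.cfc_eq, IsHermitian.cfc, Unitary.conjStarAlgAut_apply]
  rfl

theorem isHermitian_mpow (A : Matrix n n ℂ) (r : ℝ) : (mpow A r).IsHermitian := by
  by_cases hA : A.IsHermitian
  · rw [mpow_eq_cfc hA]
    exact cfc_predicate _ A
  · rw [mpow, dif_neg hA]
    exact isHermitian_zero

theorem mpow_sub_one_mul_self {A : Matrix n n ℂ} (hA : A.PosSemidef) {r : ℝ} (hr : r ≠ 0) :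
    mpow A (r - 1) * A = mpow A r := by
  rw [mpow_eq_cfc hA.1, mpow_eq_cfc hA.1]
  conv_lhs => rhs; rw [← cfc_id' ℝ A hA.1.isSelfAdjoint]
  rw [← cfc_mul _ _ A (A.finite_real_spectrum.continuousOn _)]
  refine cfc_congr fun x hx => ?_
  have hx0 : 0 ≤ x := by
    obtain ⟨i, rfl⟩ := hA.1.spectrum_real_eq_range_eigenvalues ▸ hx
    exact hA.eigenvalues_nonneg i
  simpa using (Real.rpow_add_one' hx0 (by simpa using hr) (y := r - 1)).symm

theorem trace_mul_mpow_sub_one_mul {M ρ : Matrix n n ℂ} (hM : M.IsHermitian) (hρ : ρ.PosSemidef)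
    {α : ℝ} (hα : α ≠ 0) :
    (M * mpow (M * ρ * M) (α - 1) * M * ρ).trace = (mpow (M * ρ * M) α).trace := by
  have hX : (M * ρ * M).PosSemidef := by
    simpa [hM.eq] using hρ.conjTranspose_mul_mul_same M
  calc (M * mpow (M * ρ * M) (α - 1) * M * ρ).trace
      = (mpow (M * ρ * M) (α - 1) * (M * ρ * M)).trace := by
        rw [mul_assoc, mul_assoc, mul_assoc, trace_mul_comm]
        simp only [mul_assoc]
    _ = (mpow (M * ρ * M) α).trace := by rw [mpow_sub_one_mul_self hX hα]

end MatrixPower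

section PartialTrace

variable {m d : Type*} [Fintype d]

theorem ptraceB_eq_sum_submatrix (ρ : Matrix (m × d) (m × d) ℂ) :
    ptraceB ρ = ∑ k, ρ.submatrix (·, k) (·, k) := by
  ext i j
  simp [ptraceB, Matrix.sum_apply]

theorem Matrix.PosSemidef.ptraceB [Fintype m] {ρ : Matrix (m × d) (m × d) ℂ} (hρ : ρ.PosSemidef) :
    (ptraceB ρ).PosSemidef := by
  rw [ptraceB_eq_sum_submatrix]
  exact posSemidef_sum _ fun k _ => hρ.submatrix _

theorem trace_kronecker_one_mul [Fintype m] [DecidableEq d] (A : Matrix m m ℂ)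
    (ρ : Matrix (m × d) (m × d) ℂ) :
    ((A ⊗ₖ (1 : Matrix d d ℂ)) * ρ).trace = (A * ptraceB ρ).trace := by
  simp only [trace, diag_apply, mul_apply, Fintype.sum_prod_type, kroneckerMap_apply, one_apply,
    mul_ite, mul_one, mul_zero, ite_mul, zero_mul, Finset.sum_ite_eq, Finset.mem_univ, if_true,
    ptraceB, of_apply, Finset.mul_sum]
  exact Finset.sum_congr rfl fun i _ => Finset.sum_comm

end PartialTrace

theorem Qt_eq_trace_mul {n : Type*} [Fintype n] [DecidableEq n] {α : ℝ} (hα : α ≠ 0)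
    {ρ : Matrix n n ℂ} (hρ : ρ.PosSemidef) (σ : Matrix n n ℂ) :
    Qt α ρ σ = (mpow σ ((1 - α) / (2 * α)) *
      mpow (mpow σ ((1 - α) / (2 * α)) * ρ * mpow σ ((1 - α) / (2 * α))) (α - 1) *
      mpow σ ((1 - α) / (2 * α)) * ρ).trace :=
  (trace_mul_mpow_sub_one_mul (isHermitian_mpow σ _) hρ hα).symm

theorem Qt_eq_of_operator_identity_general {m d : ℕ}
    (α : ℝ) (hα : (1 / 2 ≤ α ∧ α < 1) ∨ 1 < α)
    (ρAB σAB : Matrix (Fin m × Fin d) (Fin m × Fin d) ℂ)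
    (hρ : IsDensity ρAB)
    (hid : (mpow (ptraceB σAB) ((1 - α) / (2 * α)) *
          mpow (mpow (ptraceB σAB) ((1 - α) / (2 * α)) * ptraceB ρAB *
            mpow (ptraceB σAB) ((1 - α) / (2 * α))) (α - 1) *
          mpow (ptraceB σAB) ((1 - α) / (2 * α))) ⊗ₖ (1 : Matrix (Fin d) (Fin d) ℂ)
        = mpow σAB ((1 - α) / (2 * α)) *
            mpow (mpow σAB ((1 - α) / (2 * α)) * ρAB *
              mpow σAB ((1 - α) / (2 * α))) (α - 1) *
            mpow σAB ((1 - α) / (2 * α))) :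
    Qt α ρAB σAB = Qt α (ptraceB ρAB) (ptraceB σAB) := by
  have hα0 : α ≠ 0 := by rcases hα with ⟨h, -⟩ | h <;> positivity
  rw [Qt_eq_trace_mul hα0 hρ.1, ← hid, trace_kronecker_one_mul,
    Qt_eq_trace_mul hα0 hρ.1.ptraceB]

/-- Sufficiency direction of the equality condition for monotonicity of `Q̃_α`
under partial trace: the operator identity
`σ_A^γ (σ_A^γ ρ_A σ_A^γ)^{α−1} σ_A^γ ⊗ 1_B = σ_{AB}^γ (σ_{AB}^γ ρ_{AB} σ_{AB}^γ)^{α−1} σ_{AB}^γ`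
implies `Q̃_α(ρ_{AB}‖σ_{AB}) = Q̃_α(ρ_A‖σ_A)`. -/
theorem Qt_eq_of_operator_identity {m d : ℕ}
    (α : ℝ) (hα : (1 / 2 ≤ α ∧ α < 1) ∨ 1 < α)
    (ρAB σAB : Matrix (Fin m × Fin d) (Fin m × Fin d) ℂ)
    (hρ : IsDensity ρAB) (hρpd : ρAB.PosDef) (hσpd : σAB.PosDef)
    (hid : (mpow (ptraceB σAB) ((1 - α) / (2 * α)) *
          mpow (mpow (ptraceB σAB) ((1 - α) / (2 * α)) * ptraceB ρAB *
            mpow (ptraceB σAB) ((1 - α) / (2 * α))) (α - 1) *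
          mpow (ptraceB σAB) ((1 - α) / (2 * α))) ⊗ₖ (1 : Matrix (Fin d) (Fin d) ℂ)
        = mpow σAB ((1 - α) / (2 * α)) *
            mpow (mpow σAB ((1 - α) / (2 * α)) * ρAB *
              mpow σAB ((1 - α) / (2 * α))) (α - 1) *
            mpow σAB ((1 - α) / (2 * α))) :
    Qt α ρAB σAB = Qt α (ptraceB ρAB) (ptraceB σAB) :=
  Qt_eq_of_operator_identity_general α hα ρAB σAB hρ hid
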